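/- arXiv:2302.08254 — 4 statements merged into one kernel-verified Lean document; each statement's English description precedes it below -/
import Mathlib

section
/- Let A be a symmetric N×N matrix with ⟨Aξ,ξ⟩ ≥ θ|ξ|² for all ξ (θ > 0), let ν be a unit vector, μ := ⟨Aν,ν⟩, and define B v := A v − (⟨Aν,v⟩/μ) Aν. Then for every ξ orthogonal to ν, ‖(B − Id)ξ‖ ≤ √N (1 + 1/θ) ‖A − Id‖ |ξ|, where ‖A − Id‖ denotes the operator norm of A − Id. -/
open scoped RealInnerProductSpace

set_option maxHeartbeats 1000000 in
lemma aux_core {H : Type*} [NormedAddCommGroup H] [InnerProductSpace ℝ H]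
    (T : H →L[ℝ] H) (hsymm : ∀ x y : H, ⟪T x, y⟫ = ⟪x, T y⟫)
    (θ : ℝ) (hθ : 0 < θ) (hell : ∀ x : H, θ * ‖x‖ ^ 2 ≤ ⟪T x, x⟫)
    (ν : H) (hν : ‖ν‖ = 1) (ξ : H) (hξ : ⟪ξ, ν⟫ = 0) :
    ‖(T ξ - (⟪T ν, ξ⟫ / ⟪T ν, ν⟫) • T ν) - ξ‖ ≤ ‖T - 1‖ * ‖ξ‖ := by
  set t : ℝ := ‖T - 1‖ with htdef
  have ht0 : 0 ≤ t := norm_nonneg _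
  have hTsub : ∀ x : H, (T - 1) x = T x - x := fun x => rfl
  have hEb : ∀ x : H, |⟪T x, x⟫ - ‖x‖ ^ 2| ≤ t * ‖x‖ ^ 2 := by
    intro x
    have h1 : ⟪(T - 1) x, x⟫ = ⟪T x, x⟫ - ‖x‖ ^ 2 := by
      rw [hTsub, inner_sub_left, real_inner_self_eq_norm_sq]
    calc |⟪T x, x⟫ - ‖x‖ ^ 2| = |⟪(T - 1) x, x⟫| := by rw [h1]
      _ ≤ ‖(T - 1) x‖ * ‖x‖ := abs_real_inner_le_norm _ _
      _ ≤ (t * ‖x‖) * ‖x‖ := by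
          have h2 := (T - 1).le_opNorm x
          have h3 : (0:ℝ) ≤ ‖x‖ := norm_nonneg _
          nlinarith
      _ = t * ‖x‖ ^ 2 := by ring
  set θ' : ℝ := max θ (1 - t) with hθ'def
  have hθ'pos : 0 < θ' := lt_max_of_lt_left hθ
  have hell' : ∀ x : H, θ' * ‖x‖ ^ 2 ≤ ⟪T x, x⟫ := by
    intro x
    rcases le_total θ (1 - t) with h | h
    · rw [hθ'def, max_eq_right h]
      have h1 := hEb x
      have h2 : (0:ℝ) ≤ ‖x‖ ^ 2 := by positivity
      rw [abs_le] at h1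
      nlinarith
    · rw [hθ'def, max_eq_left h]; exact hell x
  set μ : ℝ := ⟪T ν, ν⟫ with hμdef
  have hμθ : θ' ≤ μ := by
    have h := hell' ν; rwa [hν, one_pow, mul_one] at h
  have hμpos : 0 < μ := lt_of_lt_of_le hθ'pos hμθ
  have hμne : μ ≠ 0 := ne_of_gt hμpos
  have hθ'le : θ' ≤ 1 + t := by
    have h := hEb ν
    rw [hν, one_pow, mul_one, abs_le] at h
    have h2 : μ ≤ 1 + t := by rw [hμdef]; linarith [h.2]
    linarith
  set w : H → H := fun x => T x - (⟪T ν, x⟫ / μ) • T ν - x with hwdef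
  have hq : ∀ x y : H, ⟪w x, y⟫ = ⟪T x, y⟫ - (⟪T ν, x⟫ * ⟪T ν, y⟫) / μ - ⟪x, y⟫ := by
    intro x y
    simp only [hwdef]
    rw [inner_sub_left, inner_sub_left, real_inner_smul_left]
    ring
  have hTc : ∀ x : H, ⟪T x, ν⟫ = ⟪T ν, x⟫ := by
    intro x; rw [hsymm x ν, real_inner_comm]
  have hsymm' : ∀ x y : H, ⟪w x, y⟫ = ⟪w y, x⟫ := by
    intro x y
    rw [hq, hq, hsymm x y, real_inner_comm (T y) x, real_inner_comm x y]
    ring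
  have hwν' : ∀ x : H, ⟪x, ν⟫ = 0 → ⟪w x, ν⟫ = 0 := by
    intro x hx
    rw [hq, hTc, hx, ← hμdef, mul_div_assoc, div_self hμne, mul_one]
    ring
  have hup : ∀ x : H, ⟪w x, x⟫ ≤ t * ‖x‖ ^ 2 := by
    intro x
    rw [hq, real_inner_self_eq_norm_sq]
    have h1 := hEb x
    rw [abs_le] at h1
    have h2 : 0 ≤ ⟪T ν, x⟫ * ⟪T ν, x⟫ / μ := div_nonneg (mul_self_nonneg _) hμpos.le
    nlinarith [h1.2]
  have hlo : ∀ x : H, ⟪x, ν⟫ = 0 → (θ' - 1) * ‖x‖ ^ 2 ≤ ⟪w x, x⟫ := by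
    intro x hx
    set c : ℝ := ⟪T ν, x⟫ with hcdef
    set y : H := x - (c / μ) • ν with hydef
    have hTy : T y = T x - (c / μ) • T ν := by rw [hydef, map_sub, map_smul]
    have h1 : ⟪T y, y⟫ = ⟪T x, x⟫ - c ^ 2 / μ := by
      rw [hTy, hydef]
      rw [inner_sub_left, inner_sub_right, inner_sub_right,
        real_inner_smul_left, real_inner_smul_left, real_inner_smul_right,
        real_inner_smul_right, hTc x, ← hcdef, ← hμdef]
      field_simp
      ring
    have h2 : ‖y‖ ^ 2 = ‖x‖ ^ 2 + (c / μ) ^ 2 := by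
      rw [hydef, norm_sub_sq_real, real_inner_smul_right, hx, norm_smul,
        Real.norm_eq_abs, mul_pow, sq_abs, hν]
      ring
    have h3 := hell' y
    rw [h1, h2] at h3
    have h4 : ⟪w x, x⟫ = ⟪T x, x⟫ - c ^ 2 / μ - ‖x‖ ^ 2 := by
      rw [hq, ← hcdef, real_inner_self_eq_norm_sq]; ring
    have h5 : 0 ≤ θ' * (c / μ) ^ 2 := by positivity
    nlinarith
  have hadd : ∀ x y : H, w (x + y) = w x + w y := by
    intro x y
    simp only [hwdef, map_add, inner_add_right, add_div, add_smul]
    abel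
  have hsmul : ∀ (a : ℝ) (x : H), w (a • x) = a • w x := by
    intro a x
    simp only [hwdef, map_smul, real_inner_smul_right]
    rw [mul_div_assoc, mul_smul, smul_sub, smul_sub]
  have hneg : ∀ x : H, w (-x) = - w x := by
    intro x
    have h := hsmul (-1) x
    simpa using h
  have hsub : ∀ x y : H, w (x - y) = w x - w y := by
    intro x y
    rw [sub_eq_add_neg, hadd, hneg, ← sub_eq_add_neg]
  set m : ℝ := (θ' - 1 + t) / 2 with hmdef
  set r : ℝ := (t + 1 - θ') / 2 with hrdef
  have hr0 : 0 ≤ r := by rw [hrdef]; linarith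
  have hQ : ∀ z : H, ⟪z, ν⟫ = 0 → |⟪w z, z⟫ - m * ‖z‖ ^ 2| ≤ r * ‖z‖ ^ 2 := by
    intro z hz
    rw [abs_le]
    constructor
    · nlinarith [hlo z hz]
    · nlinarith [hup z]
  have hkey : ∀ x y : H, ⟪x, ν⟫ = 0 → ⟪y, ν⟫ = 0 →
      ⟪w x, y⟫ - m * ⟪x, y⟫ ≤ (r / 2) * (‖x‖ ^ 2 + ‖y‖ ^ 2) := by
    intro x y hx hy
    have hxy1 : ⟪x + y, ν⟫ = 0 := by rw [inner_add_left, hx, hy]; ring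
    have hxy2 : ⟪x - y, ν⟫ = 0 := by rw [inner_sub_left, hx, hy]; ring
    have e1 : ⟪w (x + y), x + y⟫ = ⟪w x, x⟫ + 2 * ⟪w x, y⟫ + ⟪w y, y⟫ := by
      rw [hadd, inner_add_left, inner_add_right, inner_add_right, hsymm' y x]; ring
    have e2 : ⟪w (x - y), x - y⟫ = ⟪w x, x⟫ - 2 * ⟪w x, y⟫ + ⟪w y, y⟫ := by
      rw [hsub, inner_sub_left, inner_sub_right, inner_sub_right, hsymm' y x]; ring
    have p1 : ‖x + y‖ ^ 2 = ‖x‖ ^ 2 + 2 * ⟪x, y⟫ + ‖y‖ ^ 2 := by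
      rw [← real_inner_self_eq_norm_sq, inner_add_add_self, real_inner_comm y x,
        real_inner_self_eq_norm_sq, real_inner_self_eq_norm_sq]
      ring
    have p2 : ‖x - y‖ ^ 2 = ‖x‖ ^ 2 - 2 * ⟪x, y⟫ + ‖y‖ ^ 2 := by
      rw [← real_inner_self_eq_norm_sq, inner_sub_sub_self, real_inner_comm y x,
        real_inner_self_eq_norm_sq, real_inner_self_eq_norm_sq]
      ring
    have q1 := hQ (x + y) hxy1
    rw [abs_le, e1, p1] at q1
    have q2 := hQ (x - y) hxy2
    rw [abs_le, e2, p2] at q2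
    linarith [q1.2, q2.1]
  have hw0 : w 0 = 0 := by simpa using hsmul 0 0
  have hkey2 : ∀ x y : H, ⟪x, ν⟫ = 0 → ⟪y, ν⟫ = 0 →
      ⟪w x, y⟫ - m * ⟪x, y⟫ ≤ r * (‖x‖ * ‖y‖) := by
    intro x y hx hy
    rcases eq_or_ne x 0 with rfl | hx0
    · rw [hw0]; simp
    rcases eq_or_ne y 0 with rfl | hy0
    · simp
    have hnx : 0 < ‖x‖ := norm_pos_iff.mpr hx0
    have hny : 0 < ‖y‖ := norm_pos_iff.mpr hy0
    have hx' : ⟪(‖y‖ : ℝ) • x, ν⟫ = 0 := by rw [real_inner_smul_left, hx, mul_zero]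
    have hy' : ⟪(‖x‖ : ℝ) • y, ν⟫ = 0 := by rw [real_inner_smul_left, hy, mul_zero]
    have h := hkey (‖y‖ • x) (‖x‖ • y) hx' hy'
    simp only [hsmul, real_inner_smul_left, real_inner_smul_right, norm_smul,
      Real.norm_eq_abs, abs_of_nonneg (norm_nonneg x), abs_of_nonneg (norm_nonneg y)] at h
    have hpos : 0 < ‖x‖ * ‖y‖ := mul_pos hnx hny
    nlinarith [h, hpos]
  set u : H := w ξ - m • ξ with hudef
  have huν : ⟪u, ν⟫ = 0 := by
    rw [hudef, inner_sub_left, hwν' ξ hξ, real_inner_smul_left, hξ]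
    ring
  have h5 : ⟪u, u⟫ = ⟪w ξ, u⟫ - m * ⟪ξ, u⟫ := by
    conv_lhs => rw [hudef]
    rw [inner_sub_left, real_inner_smul_left]
  have hu2 : ‖u‖ ^ 2 ≤ r * (‖ξ‖ * ‖u‖) := by
    rw [← real_inner_self_eq_norm_sq, h5]
    exact hkey2 ξ u hξ huν
  have hu : ‖u‖ ≤ r * ‖ξ‖ := by
    rcases eq_or_lt_of_le (norm_nonneg u) with h | h
    · rw [← h]; positivity
    · refine le_of_mul_le_mul_right ?_ h
      nlinarith [hu2]
  have hwu : w ξ = u + m • ξ := by rw [hudef, sub_add_cancel]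
  have hfin : ‖w ξ‖ ≤ t * ‖ξ‖ := by
    calc ‖w ξ‖ = ‖u + m • ξ‖ := by rw [hwu]
      _ ≤ ‖u‖ + ‖m • ξ‖ := norm_add_le _ _
      _ = ‖u‖ + |m| * ‖ξ‖ := by rw [norm_smul, Real.norm_eq_abs]
      _ ≤ r * ‖ξ‖ + |m| * ‖ξ‖ := by linarith
      _ ≤ t * ‖ξ‖ := by
          have h1m : 1 - t ≤ θ' := le_max_right _ _
          rcases abs_cases m with ⟨he, _⟩ | ⟨he, _⟩ <;> rw [he] <;>
            nlinarith [norm_nonneg ξ]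
  exact hfin

/-- With `A` symmetric and elliptic with constant `θ`, `ν` a unit vector,
`μ = ⟨Aν,ν⟩`, and `B v = A v − (⟨Aν,v⟩/μ) A ν`, one has, for every `ξ ⊥ ν`,
`‖(B − Id)ξ‖ ≤ √N (1 + 1/θ) ‖A − Id‖ ‖ξ‖`, where `‖A − Id‖` is the operator norm. -/
theorem B_minus_id_bound (N : ℕ) (θ : ℝ) (hθ : 0 < θ)
    (A : Matrix (Fin N) (Fin N) ℝ) (hA : A.IsSymm)
    (hell : ∀ ξ : EuclideanSpace ℝ (Fin N),
      θ * ‖ξ‖ ^ 2 ≤ ⟪Matrix.toEuclideanCLM (𝕜 := ℝ) A ξ, ξ⟫)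
    (ν : EuclideanSpace ℝ (Fin N)) (hν : ‖ν‖ = 1) :
    ∀ ξ : EuclideanSpace ℝ (Fin N), ⟪ξ, ν⟫ = 0 →
      ‖(Matrix.toEuclideanCLM (𝕜 := ℝ) A ξ -
          (⟪Matrix.toEuclideanCLM (𝕜 := ℝ) A ν, ξ⟫ /
            ⟪Matrix.toEuclideanCLM (𝕜 := ℝ) A ν, ν⟫) •
            Matrix.toEuclideanCLM (𝕜 := ℝ) A ν) - ξ‖
        ≤ Real.sqrt N * (1 + 1 / θ) * ‖(Matrix.toEuclideanCLM (𝕜 := ℝ) (A - 1) : EuclideanSpace ℝ (Fin N) →L[ℝ] EuclideanSpace ℝ (Fin N))‖ * ‖ξ‖ := by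
  intro ξ hξ
  set T : EuclideanSpace ℝ (Fin N) →L[ℝ] EuclideanSpace ℝ (Fin N) :=
    Matrix.toEuclideanCLM (𝕜 := ℝ) A with hTdef
  have hE1 : (Matrix.toEuclideanCLM (𝕜 := ℝ) (A - 1) :
      EuclideanSpace ℝ (Fin N) →L[ℝ] EuclideanSpace ℝ (Fin N)) = T - 1 := by
    rw [map_sub, map_one, hTdef]
  have hherm : A.IsHermitian := by
    rw [Matrix.IsHermitian, Matrix.conjTranspose_eq_transpose_of_trivial]
    exact hA.eq
  have hsymL := Matrix.isHermitian_iff_isSymmetric.mp hherm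
  have hsymm : ∀ x y : EuclideanSpace ℝ (Fin N), ⟪T x, y⟫ = ⟪x, T y⟫ := by
    intro x y
    have h1 : T x = Matrix.toEuclideanLin A x := by
      rw [hTdef, ← Matrix.coe_toEuclideanCLM_eq_toEuclideanLin]; rfl
    have h2 : T y = Matrix.toEuclideanLin A y := by
      rw [hTdef, ← Matrix.coe_toEuclideanCLM_eq_toEuclideanLin]; rfl
    rw [h1, h2]
    exact hsymL x y
  have hmain := aux_core T hsymm θ hθ hell ν hν ξ hξ
  rw [hE1]
  have ht0 : 0 ≤ ‖T - 1‖ := norm_nonneg _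
  have hξ0 : 0 ≤ ‖ξ‖ := norm_nonneg _
  rcases Nat.eq_zero_or_pos N with hN | hN
  · have hz : ‖ξ‖ = 0 := by
      subst hN
      have hξ0' : ξ = 0 := Subsingleton.elim _ _
      simp [hξ0']
    rw [hz, mul_zero] at hmain
    rw [hz, mul_zero]
    exact hmain
  · have h1 : (1 : ℝ) ≤ Real.sqrt N := by
      rw [Real.one_le_sqrt]
      exact_mod_cast hN
    have h2 : (1 : ℝ) ≤ 1 + 1 / θ := by
      have h2' : 0 < 1 / θ := by positivity
      linarith
    have h3 : (1 : ℝ) ≤ Real.sqrt N * (1 + 1 / θ) := by nlinarith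
    have h4 : 0 ≤ ‖T - 1‖ * ‖ξ‖ := mul_nonneg ht0 hξ0
    calc ‖(T ξ - (⟪T ν, ξ⟫ / ⟪T ν, ν⟫) • T ν) - ξ‖ ≤ ‖T - 1‖ * ‖ξ‖ := hmain
      _ ≤ (Real.sqrt N * (1 + 1 / θ)) * (‖T - 1‖ * ‖ξ‖) := le_mul_of_one_le_left h4 h3
      _ = Real.sqrt N * (1 + 1 / θ) * ‖T - 1‖ * ‖ξ‖ := by ring
end

section
/- Let A be a symmetric N×N matrix with ⟨Aξ,ξ⟩ ≥ θ|ξ|², let ν be a unit vector, μ := ⟨Aν,ν⟩, and B v := A v − (⟨Aν,v⟩/μ) Aν. If moreover ‖A − Id‖ ≤ ε with (√N/θ) ε ≤ θ/2, then ⟨Bξ,ξ⟩ ≥ (θ/2)|ξ|² for every ξ orthogonal to ν. -/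
/-!
The form `(x, y) ↦ ⟪(A - θ) x, y⟫` is positive semidefinite, and for `ξ ⊥ ν` its value at
`(ν, ξ)` is `⟪Aν, ξ⟫`. Cauchy–Schwarz for this form gives
`⟪Aν, ξ⟫² ≤ (μ - θ‖ν‖²)(⟪Aξ, ξ⟫ - θ‖ξ‖²) ≤ μ (⟪Aξ, ξ⟫ - θ‖ξ‖²)`, so that
`⟪Bξ, ξ⟫ = ⟪Aξ, ξ⟫ - ⟪Aν, ξ⟫² / μ ≥ θ‖ξ‖²`.
-/

open scoped RealInnerProductSpace

namespace LinearMap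

variable {E : Type*} [NormedAddCommGroup E] [InnerProductSpace ℝ E]

theorem IsPositive.inner_map_sq_le {S : E →ₗ[ℝ] E} (hS : S.IsPositive) (x y : E) :
    ⟪S x, y⟫ ^ 2 ≤ ⟪S x, x⟫ * ⟪S y, y⟫ := by
  have hquad (t : ℝ) : 0 ≤ ⟪S y, y⟫ * (t * t) + 2 * ⟪S x, y⟫ * t + ⟪S x, x⟫ := by
    have := hS.inner_nonneg_left (x + t • y)
    simp only [map_add, map_smul, inner_add_left, inner_add_right, real_inner_smul_left,
      real_inner_smul_right, hS.isSymmetric y x, real_inner_comm (S x) y] at this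
    linarith
  have := discrim_le_zero hquad
  rw [discrim] at this
  linarith

theorem IsSymmetric.isPositive_sub_smul_id {T : E →ₗ[ℝ] E} (hT : T.IsSymmetric) {θ : ℝ}
    (hθ : ∀ x, θ * ‖x‖ ^ 2 ≤ ⟪T x, x⟫) : (T - θ • id).IsPositive := by
  refine (isPositive_iff _).mpr ⟨hT.sub (IsSymmetric.id.smul (conj_trivial θ)), fun x => ?_⟩
  have := hθ x
  simp only [sub_apply, smul_apply, id_apply, inner_sub_left, real_inner_smul_left,
    real_inner_self_eq_norm_sq]
  linarith

theorem IsSymmetric.mul_norm_sq_le_inner_sub_smul_of_inner_eq_zero {T : E →ₗ[ℝ] E}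
    (hT : T.IsSymmetric) {θ : ℝ} (hθ₀ : 0 ≤ θ) (hθ : ∀ x, θ * ‖x‖ ^ 2 ≤ ⟪T x, x⟫) {ν ξ : E}
    (hξν : ⟪ξ, ν⟫ = 0) :
    θ * ‖ξ‖ ^ 2 ≤ ⟪T ξ - (⟪T ν, ξ⟫ / ⟪T ν, ν⟫) • T ν, ξ⟫ := by
  have hcs := (hT.isPositive_sub_smul_id hθ).inner_map_sq_le ν ξ
  simp only [sub_apply, smul_apply, id_apply, inner_sub_left, real_inner_smul_left,
    real_inner_comm ξ ν, hξν, mul_zero, sub_zero, real_inner_self_eq_norm_sq] at hcs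
  have hr : 0 ≤ ⟪T ξ, ξ⟫ - θ * ‖ξ‖ ^ 2 := sub_nonneg.mpr (hθ ξ)
  have hμ : θ * ‖ν‖ ^ 2 ≤ ⟪T ν, ν⟫ := hθ ν
  have hq : ⟪T ν, ξ⟫ ^ 2 / ⟪T ν, ν⟫ ≤ ⟪T ξ, ξ⟫ - θ * ‖ξ‖ ^ 2 := by
    refine div_le_of_le_mul₀ (le_trans (by positivity) hμ) hr ?_
    nlinarith [mul_nonneg (mul_nonneg hθ₀ (sq_nonneg ‖ν‖)) hr]
  rw [inner_sub_left, real_inner_smul_left]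
  linarith [show ⟪T ν, ξ⟫ / ⟪T ν, ν⟫ * ⟪T ν, ξ⟫ = ⟪T ν, ξ⟫ ^ 2 / ⟪T ν, ν⟫ by ring]

end LinearMap

theorem B_operator_elliptic_general (N : ℕ) (θ : ℝ) (hθ : 0 < θ)
    (A : Matrix (Fin N) (Fin N) ℝ) (hA : A.IsSymm)
    (hell : ∀ ξ : EuclideanSpace ℝ (Fin N),
      θ * ‖ξ‖ ^ 2 ≤ ⟪Matrix.toEuclideanCLM (𝕜 := ℝ) A ξ, ξ⟫)
    (ν : EuclideanSpace ℝ (Fin N)) :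
    ∀ ξ : EuclideanSpace ℝ (Fin N), ⟪ξ, ν⟫ = 0 →
      θ / 2 * ‖ξ‖ ^ 2 ≤
        ⟪Matrix.toEuclideanCLM (𝕜 := ℝ) A ξ -
            (⟪Matrix.toEuclideanCLM (𝕜 := ℝ) A ν, ξ⟫ /
              ⟪Matrix.toEuclideanCLM (𝕜 := ℝ) A ν, ν⟫) •
              Matrix.toEuclideanCLM (𝕜 := ℝ) A ν, ξ⟫ := by
  intro ξ hξν
  have hsymm : (Matrix.toEuclideanLin A).IsSymmetric :=
    Matrix.isSymmetric_toEuclideanLin_iff.mpr hA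
  calc θ / 2 * ‖ξ‖ ^ 2 ≤ θ * ‖ξ‖ ^ 2 := by gcongr; linarith
    _ ≤ _ := hsymm.mul_norm_sq_le_inner_sub_smul_of_inner_eq_zero hθ.le hell hξν

/-- With `A` symmetric and elliptic with constant `θ`, `ν` a unit vector, `μ = ⟨Aν,ν⟩`,
`B v = A v − (⟨Aν,v⟩/μ) A ν`, if `‖A − Id‖ ≤ ε` (operator norm) with `(√N/θ) ε ≤ θ/2`,
then `⟨Bξ,ξ⟩ ≥ (θ/2)‖ξ‖²` for every `ξ ⊥ ν`. -/
theorem B_operator_elliptic (N : ℕ) (θ ε : ℝ) (hθ : 0 < θ) (hε : 0 ≤ ε)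
    (A : Matrix (Fin N) (Fin N) ℝ) (hA : A.IsSymm)
    (hell : ∀ ξ : EuclideanSpace ℝ (Fin N),
      θ * ‖ξ‖ ^ 2 ≤ ⟪Matrix.toEuclideanCLM (𝕜 := ℝ) A ξ, ξ⟫)
    (ν : EuclideanSpace ℝ (Fin N)) (hν : ‖ν‖ = 1)
    (hnear : ‖(Matrix.toEuclideanCLM (𝕜 := ℝ) (A - 1) : EuclideanSpace ℝ (Fin N) →L[ℝ] EuclideanSpace ℝ (Fin N))‖ ≤ ε)
    (hsmall : Real.sqrt N / θ * ε ≤ θ / 2) :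
    ∀ ξ : EuclideanSpace ℝ (Fin N), ⟪ξ, ν⟫ = 0 →
      θ / 2 * ‖ξ‖ ^ 2 ≤
        ⟪Matrix.toEuclideanCLM (𝕜 := ℝ) A ξ -
            (⟪Matrix.toEuclideanCLM (𝕜 := ℝ) A ν, ξ⟫ /
              ⟪Matrix.toEuclideanCLM (𝕜 := ℝ) A ν, ν⟫) •
              Matrix.toEuclideanCLM (𝕜 := ℝ) A ν, ξ⟫ :=
  B_operator_elliptic_general N θ hθ A hA hell ν
end

section
/- Let ε ∈ (0,1) and let g_n ∈ C([0,1], ℝ^l) satisfy g_n([0,1]) ⊂ {x ∈ ℝ^l : x_i ≥ 0, x_i ≤ 1−ε for all i, Σ x_i = 1}. Define Σ_{2,l} := {x ∈ ℝ^l : ∃ i ≠ j such that x_h = 0 for all h ≠ i, j}. If dist(g_n([0,1]), Σ_{2,l}) → 0 as n → ∞, then up to a subsequence there exist indices i ≠ j such that ε/2 < g_{i,n}(x), g_{j,n}(x) < 1 − ε/2 for all x ∈ [0,1] and n large, and g_{h,n} → 0 uniformly on [0,1] for every h ∉ {i,j}. -/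
/-- Key per-curve lemma: if a continuous curve in the truncated simplex has all but two
coordinates smaller than `δ ≤ ε/(4l)` at every point, then there is a fixed pair of indices
`i ≠ j` whose coordinates stay in `(ε/2, 1-ε/2)` while all others stay below `δ`. -/
lemma simplex_key (l : ℕ) (hl : 2 ≤ l) (ε δ : ℝ) (hε : 0 < ε)
    (hδ : 0 < δ) (hδε : δ ≤ ε / (4 * l))
    (f : ℝ → Fin l → ℝ) (hcont : ContinuousOn f (Set.Icc 0 1))
    (hrange : ∀ x ∈ Set.Icc (0:ℝ) 1,
      (∀ i, 0 ≤ f x i) ∧ (∀ i, f x i ≤ 1 - ε) ∧ (∑ i, f x i) = 1)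
    (hnear : ∀ x ∈ Set.Icc (0:ℝ) 1, ∃ i j : Fin l, i ≠ j ∧
      ∀ h, h ≠ i → h ≠ j → |f x h| < δ) :
    ∃ i j : Fin l, i ≠ j ∧ ∀ x ∈ Set.Icc (0:ℝ) 1,
      (ε/2 < f x i ∧ f x i < 1 - ε/2 ∧ ε/2 < f x j ∧ f x j < 1 - ε/2) ∧
      ∀ h, h ≠ i → h ≠ j → f x h < δ := by
  have hl2 : (2:ℝ) ≤ (l:ℝ) := by exact_mod_cast hl
  have h4l : (0:ℝ) < 4 * l := by nlinarith
  have hδε' : δ * (4 * l) ≤ ε := by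
    rw [le_div_iff₀ h4l] at hδε; exact hδε
  have hlδ : (l:ℝ) * δ ≤ ε / 4 := by nlinarith
  have hδε2 : δ < ε / 2 := by nlinarith
  -- Step 1: pointwise structure
  have step1 : ∀ x ∈ Set.Icc (0:ℝ) 1, ∃ i j : Fin l, i ≠ j ∧
      (ε/2 < f x i ∧ f x i < 1 - ε/2 ∧ ε/2 < f x j ∧ f x j < 1 - ε/2) ∧
      ∀ h, h ≠ i → h ≠ j → f x h < δ := by
    intro x hx
    obtain ⟨hpos, hub, hsum⟩ := hrange x hx
    obtain ⟨i, j, hij, hsmall⟩ := hnear x hx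
    have hsmall' : ∀ h, h ≠ i → h ≠ j → f x h < δ :=
      fun h hi hj => (abs_lt.mp (hsmall h hi hj)).2
    have hsub : ({i, j} : Finset (Fin l)) ⊆ Finset.univ := Finset.subset_univ _
    have hsplit : ∑ h ∈ Finset.univ \ ({i, j} : Finset (Fin l)), f x h
        + ∑ h ∈ ({i, j} : Finset (Fin l)), f x h = ∑ h, f x h := Finset.sum_sdiff hsub
    have hpair : ∑ h ∈ ({i, j} : Finset (Fin l)), f x h = f x i + f x j :=
      Finset.sum_pair hij
    have hrest_nonneg : 0 ≤ ∑ h ∈ Finset.univ \ ({i, j} : Finset (Fin l)), f x h :=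
      Finset.sum_nonneg fun h _ => hpos h
    have hrest_le : ∑ h ∈ Finset.univ \ ({i, j} : Finset (Fin l)), f x h ≤ (l:ℝ) * δ := by
      have h1 : ∑ h ∈ Finset.univ \ ({i, j} : Finset (Fin l)), f x h
          ≤ ∑ _h ∈ Finset.univ \ ({i, j} : Finset (Fin l)), δ := by
        refine Finset.sum_le_sum fun h hh => ?_
        simp only [Finset.mem_sdiff, Finset.mem_insert, Finset.mem_singleton] at hh
        exact le_of_lt (hsmall' h (fun e => hh.2 (Or.inl e)) (fun e => hh.2 (Or.inr e)))
      have h2 : ∑ _h ∈ Finset.univ \ ({i, j} : Finset (Fin l)), δ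
          = ((Finset.univ \ ({i, j} : Finset (Fin l))).card : ℝ) * δ := by
        rw [Finset.sum_const, nsmul_eq_mul]
      have h3 : ((Finset.univ \ ({i, j} : Finset (Fin l))).card : ℝ) ≤ (l:ℝ) := by
        have h3' : (Finset.univ \ ({i, j} : Finset (Fin l))).card ≤ l := by
          simpa using Finset.card_le_univ (Finset.univ \ ({i, j} : Finset (Fin l)))
        exact_mod_cast h3'
      calc ∑ h ∈ Finset.univ \ ({i, j} : Finset (Fin l)), f x h
          ≤ ((Finset.univ \ ({i, j} : Finset (Fin l))).card : ℝ) * δ := h2 ▸ h1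
        _ ≤ (l:ℝ) * δ := mul_le_mul_of_nonneg_right h3 hδ.le
    have hijsum_lb : 1 - (l:ℝ) * δ ≤ f x i + f x j := by
      rw [hsum, hpair] at hsplit; linarith
    have hijsum_ub : f x i + f x j ≤ 1 := by
      rw [hsum, hpair] at hsplit; linarith
    have hbi : ε/2 < f x i := by have := hub j; linarith
    have hbj : ε/2 < f x j := by have := hub i; linarith
    refine ⟨i, j, hij, ⟨hbi, by linarith, hbj, by linarith⟩, hsmall'⟩
  -- Dichotomy
  have dich : ∀ x ∈ Set.Icc (0:ℝ) 1, ∀ h : Fin l, f x h < δ ∨ ε/2 < f x h := by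
    intro x hx h
    obtain ⟨i, j, hij, hbig, hsmall⟩ := step1 x hx
    by_cases hi : h = i
    · right; subst hi; exact hbig.1
    by_cases hj : h = j
    · right; subst hj; exact hbig.2.2.1
    · left; exact hsmall h hi hj
  have h01 : (0:ℝ) ∈ Set.Icc (0:ℝ) 1 := ⟨le_refl _, zero_le_one⟩
  -- Constancy via IVT
  have hconst : ∀ x ∈ Set.Icc (0:ℝ) 1, ∀ h : Fin l, ε/2 < f 0 h → ε/2 < f x h := by
    intro x hx h h0
    rcases dich x hx h with hlt | hgt
    · exfalso
      have hsubset : Set.uIcc (0:ℝ) x ⊆ Set.Icc 0 1 := by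
        rw [Set.uIcc_of_le hx.1]
        exact fun t ht => ⟨ht.1, le_trans ht.2 hx.2⟩
      have hc : ContinuousOn (fun t => f t h) (Set.uIcc (0:ℝ) x) :=
        ((continuous_apply h).comp_continuousOn hcont).mono hsubset
      have hmem : ε/2 ∈ Set.uIcc (f 0 h) (f x h) := by
        rw [Set.mem_uIcc]; right; constructor <;> linarith
      obtain ⟨t, ht, hft⟩ := intermediate_value_uIcc hc hmem
      have ht' : t ∈ Set.Icc (0:ℝ) 1 := hsubset ht
      have hft' : f t h = ε / 2 := hft
      rcases dich t ht' h with h1 | h2 <;> linarith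
    · exact hgt
  -- Conclusion
  obtain ⟨i, j, hij, hbig0, _⟩ := step1 0 h01
  refine ⟨i, j, hij, ?_⟩
  intro x hx
  obtain ⟨i', j', hij', hbig', hsmall'⟩ := step1 x hx
  have hxi : ε/2 < f x i := hconst x hx i hbig0.1
  have hxj : ε/2 < f x j := hconst x hx j hbig0.2.2.1
  have hi' : i = i' ∨ i = j' := by
    by_contra hc; push_neg at hc
    have := hsmall' i hc.1 hc.2; linarith
  have hj' : j = i' ∨ j = j' := by
    by_contra hc; push_neg at hc
    have := hsmall' j hc.1 hc.2; linarith
  rcases hi' with rfl | rfl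
  · rcases hj' with rfl | rfl
    · exact absurd rfl hij
    · exact ⟨⟨hbig'.1, hbig'.2.1, hbig'.2.2.1, hbig'.2.2.2⟩,
        fun h hhi hhj => hsmall' h hhi hhj⟩
  · rcases hj' with rfl | rfl
    · exact ⟨⟨hbig'.2.2.1, hbig'.2.2.2, hbig'.1, hbig'.2.1⟩,
        fun h hhi hhj => hsmall' h hhj hhi⟩
    · exact absurd rfl hij

/-- Simplex lemma: if continuous curves `g n : [0,1] → ℝ^l` take values in the part of the
simplex `{x : xᵢ ≥ 0, xᵢ ≤ 1−ε, Σ xᵢ = 1}` and approach uniformly the set `Σ_{2,l}` of points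
with at most two nonzero coordinates, then along a subsequence there are two indices `i ≠ j`
with `ε/2 < g_{i,n}, g_{j,n} < 1 − ε/2` for `n` large, while all other components tend to `0`
uniformly. -/
theorem simplex_lemma (l : ℕ) (hl : 2 ≤ l) (ε : ℝ) (hε : 0 < ε) (hε1 : ε < 1)
    (g : ℕ → ℝ → (Fin l → ℝ))
    (hcont : ∀ n, ContinuousOn (g n) (Set.Icc 0 1))
    (hrange : ∀ n, ∀ x ∈ Set.Icc (0 : ℝ) 1,
      (∀ i, 0 ≤ g n x i) ∧ (∀ i, g n x i ≤ 1 - ε) ∧ (∑ i, g n x i) = 1)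
    (hdist : ∀ δ > 0, ∃ n₀, ∀ n ≥ n₀, ∀ x ∈ Set.Icc (0 : ℝ) 1,
      ∃ y ∈ {y : Fin l → ℝ | ∃ i j : Fin l, i ≠ j ∧ ∀ h, h ≠ i → h ≠ j → y h = 0},
        dist (g n x) y < δ) :
    ∃ φ : ℕ → ℕ, StrictMono φ ∧ ∃ i j : Fin l, i ≠ j ∧
      (∃ n₀, ∀ n ≥ n₀, ∀ x ∈ Set.Icc (0 : ℝ) 1,
        ε / 2 < g (φ n) x i ∧ g (φ n) x i < 1 - ε / 2 ∧
        ε / 2 < g (φ n) x j ∧ g (φ n) x j < 1 - ε / 2) ∧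
      (∀ h : Fin l, h ≠ i → h ≠ j →
        TendstoUniformlyOn (fun n x => g (φ n) x h) (fun _ => 0) Filter.atTop
          (Set.Icc 0 1)) := by
  classical
  have hl2 : (2:ℝ) ≤ (l:ℝ) := by exact_mod_cast hl
  set δ₀ : ℝ := ε / (4 * l) with hδ₀def
  have h4l : (0:ℝ) < 4 * l := by nlinarith
  have hδ₀pos : 0 < δ₀ := div_pos hε h4l
  have hδ₀lt : δ₀ < ε / 2 := by
    rw [hδ₀def, div_lt_div_iff₀ h4l (by norm_num : (0:ℝ) < 2)]
    nlinarith
  -- restate the distance hypothesis coordinatewise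
  have hnear : ∀ δ > (0:ℝ), ∃ n₀, ∀ n ≥ n₀, ∀ x ∈ Set.Icc (0:ℝ) 1,
      ∃ i j : Fin l, i ≠ j ∧ ∀ h, h ≠ i → h ≠ j → |g n x h| < δ := by
    intro δ hδ
    obtain ⟨n₀, hn₀⟩ := hdist δ hδ
    refine ⟨n₀, fun n hn x hx => ?_⟩
    obtain ⟨y, ⟨i, j, hij, hy⟩, hdy⟩ := hn₀ n hn x hx
    refine ⟨i, j, hij, fun h hi hj => ?_⟩
    have hle : dist (g n x h) (y h) ≤ dist (g n x) y := dist_le_pi_dist _ _ h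
    rw [hy h hi hj, Real.dist_eq, sub_zero] at hle
    exact lt_of_le_of_lt hle hdy
  obtain ⟨N₀, hN₀⟩ := hnear δ₀ hδ₀pos
  have hkey : ∀ n, N₀ ≤ n → ∃ i j : Fin l, i ≠ j ∧ ∀ x ∈ Set.Icc (0:ℝ) 1,
      (ε/2 < g n x i ∧ g n x i < 1 - ε/2 ∧ ε/2 < g n x j ∧ g n x j < 1 - ε/2) ∧
      ∀ h, h ≠ i → h ≠ j → g n x h < δ₀ :=
    fun n hn => simplex_key l hl ε δ₀ hε hδ₀pos (le_refl _) (g n) (hcont n) (hrange n)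
      (hN₀ n hn)
  have hkey' : ∀ n, ∃ p : Fin l × Fin l, N₀ ≤ n →
      p.1 ≠ p.2 ∧ ∀ x ∈ Set.Icc (0:ℝ) 1,
        (ε/2 < g n x p.1 ∧ g n x p.1 < 1 - ε/2 ∧
          ε/2 < g n x p.2 ∧ g n x p.2 < 1 - ε/2) ∧
        ∀ h, h ≠ p.1 → h ≠ p.2 → g n x h < δ₀ := by
    intro n
    by_cases hn : N₀ ≤ n
    · obtain ⟨i, j, h1, h2⟩ := hkey n hn
      exact ⟨(i, j), fun _ => ⟨h1, h2⟩⟩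
    · exact ⟨(⟨0, by omega⟩, ⟨0, by omega⟩), fun h => absurd h hn⟩
  choose P hP using hkey'
  -- pigeonhole
  have hinf : ∃ p : Fin l × Fin l, {n | N₀ ≤ n ∧ P n = p}.Infinite := by
    by_contra hc
    push_neg at hc
    have hfin : (Set.Ici N₀).Finite := by
      refine Set.Finite.subset (Set.finite_iUnion fun p : Fin l × Fin l => hc p) ?_
      intro n hn
      exact Set.mem_iUnion.mpr ⟨P n, hn, rfl⟩
    exact Set.Ici_infinite N₀ hfin
  obtain ⟨p, hp⟩ := hinf
  have hp' : {n | N₀ ≤ n ∧ P n = p}.Infinite := hp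
  set φ : ℕ → ℕ := Nat.nth (fun n => N₀ ≤ n ∧ P n = p) with hφdef
  have hφS : ∀ n, N₀ ≤ φ n ∧ P (φ n) = p := fun n => Nat.nth_mem_of_infinite hp' n
  have hφmono : StrictMono φ := Nat.nth_strictMono hp'
  refine ⟨φ, hφmono, p.1, p.2, ?_, ?_, ?_⟩
  · have h0 := hP (φ 0) (hφS 0).1
    rw [(hφS 0).2] at h0
    exact h0.1
  · refine ⟨0, fun n _ x hx => ?_⟩
    have h0 := hP (φ n) (hφS n).1
    rw [(hφS n).2] at h0
    exact (h0.2 x hx).1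
  · intro h hhi hhj
    rw [Metric.tendstoUniformlyOn_iff]
    intro η hη
    have hδ'pos : (0:ℝ) < min η δ₀ := lt_min hη hδ₀pos
    obtain ⟨N₁, hN₁⟩ := hnear (min η δ₀) hδ'pos
    rw [Filter.eventually_atTop]
    refine ⟨max N₀ N₁, fun n hn x hx => ?_⟩
    have hφn : max N₀ N₁ ≤ φ n := le_trans hn hφmono.le_apply
    obtain ⟨i', j', hij', hstruct⟩ := simplex_key l hl ε (min η δ₀) hε hδ'pos
      (min_le_right _ _) (g (φ n)) (hcont _) (hrange _)
      (hN₁ (φ n) (le_trans (le_max_right _ _) hφn))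
    have hPn := hP (φ n) (hφS n).1
    rw [(hφS n).2] at hPn
    have h01 : (0:ℝ) ∈ Set.Icc (0:ℝ) 1 := ⟨le_refl _, zero_le_one⟩
    have hsmall0 : g (φ n) 0 h < δ₀ := (hPn.2 0 h01).2 h hhi hhj
    have hi' : h ≠ i' := by
      rintro rfl
      have := (hstruct 0 h01).1.1
      linarith
    have hj' : h ≠ j' := by
      rintro rfl
      have := (hstruct 0 h01).1.2.2.1
      linarith
    have hlt : g (φ n) x h < min η δ₀ := (hstruct x hx).2 h hi' hj'
    have hge : 0 ≤ g (φ n) x h := (hrange (φ n) x hx).1 h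
    rw [Real.dist_eq, zero_sub, abs_neg, abs_of_nonneg hge]
    exact lt_of_lt_of_le hlt (min_le_left _ _)
end

section
/- Let H, E : (0, r̄) → ℝ be absolutely continuous functions with H > 0, and suppose |H'(r) − (2/r)E(r)| ≤ C H(r) for all r ∈ (0, r̄). If N(r) := E(r)/H(r) satisfies N(r) ≤ λ for all r in a subinterval [r̃, R] ⊂ (0, r̄), then the function r ↦ H(r) r^{−2λ} e^{−Cr} is monotone nonincreasing on [r̃, R]. Similarly, if N(r) ≥ σ on [r̃, R], then r ↦ H(r) r^{−2σ} e^{Cr} is monotone nondecreasing on [r̃, R]. -/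
/-! The logarithmic derivative of `H r ^ p * exp (c * r)` is `H'/H + p/r + c`. The hypothesis
gives `|H'/H - 2N/r| ≤ C`, so with `p = -2λ, c = -C` it is at most `2(N - λ)/r ≤ 0`, and with
`p = -2σ, c = C` at least `2(N - σ)/r ≥ 0`. -/

open Set

theorem hasDerivAt_mul_rpow_mul_exp {H : ℝ → ℝ} {H' x : ℝ} (p c : ℝ) (hH : HasDerivAt H H' x)
    (hx : x ≠ 0) :
    HasDerivAt (fun r => H r * r ^ p * Real.exp (c * r))
      (Real.exp (c * x) * x ^ p * (H' + p * H x / x + c * H x)) x := by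
  have hexp : HasDerivAt (fun r => Real.exp (c * r)) (Real.exp (c * x) * c) x := by
    simpa using ((hasDerivAt_id x).const_mul c).exp
  refine ((hH.mul (Real.hasDerivAt_rpow_const (p := p) (Or.inl hx))).mul hexp).congr_deriv ?_
  rw [Real.rpow_sub_one hx, Pi.mul_apply]
  field_simp

section Monotonicity

variable {s : Set ℝ} {H H' : ℝ → ℝ} {p c : ℝ}

theorem monotoneOn_mul_rpow_mul_exp (hs : Convex ℝ s) (hs0 : s ⊆ Ioi 0)
    (hH : ∀ x ∈ s, HasDerivAt H (H' x) x)
    (hH' : ∀ x ∈ interior s, 0 ≤ H' x + p * H x / x + c * H x) :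
    MonotoneOn (fun r => H r * r ^ p * Real.exp (c * r)) s := by
  have hf : ∀ x ∈ s, HasDerivAt (fun r => H r * r ^ p * Real.exp (c * r))
      (Real.exp (c * x) * x ^ p * (H' x + p * H x / x + c * H x)) x :=
    fun x hx => hasDerivAt_mul_rpow_mul_exp p c (hH x hx) (hs0 hx).ne'
  refine monotoneOn_of_deriv_nonneg hs
    (fun x hx => (hf x hx).continuousAt.continuousWithinAt)
    (fun x hx => (hf x (interior_subset hx)).differentiableAt.differentiableWithinAt)
    fun x hx => ?_
  have hx0 : 0 < x := hs0 (interior_subset hx)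
  rw [(hf x (interior_subset hx)).deriv]
  exact mul_nonneg (by positivity) (hH' x hx)

theorem antitoneOn_mul_rpow_mul_exp (hs : Convex ℝ s) (hs0 : s ⊆ Ioi 0)
    (hH : ∀ x ∈ s, HasDerivAt H (H' x) x)
    (hH' : ∀ x ∈ interior s, H' x + p * H x / x + c * H x ≤ 0) :
    AntitoneOn (fun r => H r * r ^ p * Real.exp (c * r)) s := by
  have hf : ∀ x ∈ s, HasDerivAt (fun r => H r * r ^ p * Real.exp (c * r))
      (Real.exp (c * x) * x ^ p * (H' x + p * H x / x + c * H x)) x :=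
    fun x hx => hasDerivAt_mul_rpow_mul_exp p c (hH x hx) (hs0 hx).ne'
  refine antitoneOn_of_deriv_nonpos hs
    (fun x hx => (hf x hx).continuousAt.continuousWithinAt)
    (fun x hx => (hf x (interior_subset hx)).differentiableAt.differentiableWithinAt)
    fun x hx => ?_
  have hx0 : 0 < x := hs0 (interior_subset hx)
  rw [(hf x (interior_subset hx)).deriv]
  exact mul_nonpos_of_nonneg_of_nonpos (by positivity) (hH' x hx)

end Monotonicity

section FrequencyBounds

variable {r h h' e C a : ℝ}

theorem le_of_abs_sub_le_of_le (hr : 0 < r) (hb : |h' - 2 / r * e| ≤ C * h) (he : e ≤ a * h) :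
    h' ≤ 2 * a * h / r + C * h := by
  have : 2 / r * e ≤ 2 / r * (a * h) := mul_le_mul_of_nonneg_left he (by positivity)
  linarith [(abs_le.mp hb).2, show 2 / r * (a * h) = 2 * a * h / r by ring]

theorem ge_of_abs_sub_le_of_ge (hr : 0 < r) (hb : |h' - 2 / r * e| ≤ C * h) (he : a * h ≤ e) :
    2 * a * h / r - C * h ≤ h' := by
  have : 2 / r * (a * h) ≤ 2 / r * e := mul_le_mul_of_nonneg_left he (by positivity)
  linarith [(abs_le.mp hb).1, show 2 / r * (a * h) = 2 * a * h / r by ring]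

end FrequencyBounds

theorem doubling_lemma_general (C lam sig rbar rt R : ℝ)
    (hrt : 0 < rt) (hR : R < rbar)
    (H E H' : ℝ → ℝ)
    (hHpos : ∀ r ∈ Set.Ioo (0 : ℝ) rbar, 0 < H r)
    (hderiv : ∀ r ∈ Set.Ioo (0 : ℝ) rbar, HasDerivAt H (H' r) r)
    (hbound : ∀ r ∈ Set.Ioo (0 : ℝ) rbar, |H' r - (2 / r) * E r| ≤ C * H r) :
    ((∀ r ∈ Set.Icc rt R, E r / H r ≤ lam) →
      AntitoneOn (fun r : ℝ => H r * r ^ (-(2 * lam)) * Real.exp (-(C * r)))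
        (Set.Icc rt R)) ∧
    ((∀ r ∈ Set.Icc rt R, sig ≤ E r / H r) →
      MonotoneOn (fun r : ℝ => H r * r ^ (-(2 * sig)) * Real.exp (C * r))
        (Set.Icc rt R)) := by
  have hsub : Icc rt R ⊆ Ioo 0 rbar := fun r hr => ⟨hrt.trans_le hr.1, hr.2.trans_lt hR⟩
  have hpos : Icc rt R ⊆ Ioi 0 := fun r hr => (hsub hr).1
  have hH : ∀ x ∈ Icc rt R, HasDerivAt H (H' x) x := fun x hx => hderiv x (hsub hx)
  constructor
  · intro hN
    simpa only [neg_mul] using antitoneOn_mul_rpow_mul_exp (p := -(2 * lam)) (c := -C)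
      (convex_Icc rt R) hpos hH fun x hx => by
        have hx := interior_subset hx
        have hE := (div_le_iff₀ (hHpos x (hsub hx))).1 (hN x hx)
        linarith [le_of_abs_sub_le_of_le (hsub hx).1 (hbound x (hsub hx)) hE,
          show -(2 * lam) * H x / x = -(2 * lam * H x / x) by ring]
  · intro hN
    refine monotoneOn_mul_rpow_mul_exp (convex_Icc rt R) hpos hH fun x hx => ?_
    have hx := interior_subset hx
    have hE := (le_div_iff₀ (hHpos x (hsub hx))).1 (hN x hx)
    linarith [ge_of_abs_sub_le_of_ge (hsub hx).1 (hbound x (hsub hx)) hE,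
      show -(2 * sig) * H x / x = -(2 * sig * H x / x) by ring]

/-- Doubling lemma: if `H > 0` is differentiable on `(0, r̄)` with
`|H'(r) − (2/r) E(r)| ≤ C H(r)`, then bounds on the Almgren quotient `N = E/H`
on a subinterval `[r̃, R]` give monotonicity: if `N ≤ λ` there, then
`r ↦ H(r) r^{−2λ} e^{−Cr}` is nonincreasing, and if `N ≥ σ` there, then
`r ↦ H(r) r^{−2σ} e^{Cr}` is nondecreasing. -/
theorem doubling_lemma (C lam sig rbar rt R : ℝ) (hC : 0 < C)
    (hrt : 0 < rt) (hrtR : rt ≤ R) (hR : R < rbar)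
    (H E H' : ℝ → ℝ)
    (hHpos : ∀ r ∈ Set.Ioo (0 : ℝ) rbar, 0 < H r)
    (hderiv : ∀ r ∈ Set.Ioo (0 : ℝ) rbar, HasDerivAt H (H' r) r)
    (hbound : ∀ r ∈ Set.Ioo (0 : ℝ) rbar, |H' r - (2 / r) * E r| ≤ C * H r) :
    ((∀ r ∈ Set.Icc rt R, E r / H r ≤ lam) →
      AntitoneOn (fun r : ℝ => H r * r ^ (-(2 * lam)) * Real.exp (-(C * r)))
        (Set.Icc rt R)) ∧
    ((∀ r ∈ Set.Icc rt R, sig ≤ E r / H r) →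
      MonotoneOn (fun r : ℝ => H r * r ^ (-(2 * sig)) * Real.exp (C * r))
        (Set.Icc rt R)) :=
  doubling_lemma_general C lam sig rbar rt R hrt hR H E H' hHpos hderiv hbound
end
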